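/- arXiv:1906.06950 — 2 statements merged into one kernel-verified Lean document; each statement's English description precedes it below -/
import Mathlib

section
/- Let f : [0,1] → ℝ be a continuous function with f(0) = 0 and let ε > 0. Then there exists δ > 0 such that for every unital C*-algebra A and all positive contractions a, b ∈ A with ‖ab − b‖ < δ and ‖ba − b‖ < δ, one has ‖a f(b) − f(b)‖ < ε, where f(b) is defined via the continuous functional calculus. -/
open Filter Topology

noncomputable section

/-- Positivity in a `*`-ring, characterized (as valid in any C*-algebra) as being a
star-square: `x = y* y`. -/
def IsSqPos {C : Type*} [Mul C] [Star C] (x : C) : Prop := ∃ y : C, x = star y * y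

/-- Cuntz subequivalence: `a ≲ b` iff there is a sequence `vₙ` with `vₙ b vₙ* → a`. -/
def CuntzLE {C : Type*} [Ring C] [Star C] [Norm C] (a b : C) : Prop :=
  ∃ v : ℕ → C, Filter.Tendsto (fun n => ‖v n * b * star (v n) - a‖) Filter.atTop (nhds 0)

/-- A (ℂ-linear) completely positive map: positive matrices over the domain are sent to
positive matrices over the codomain, at every matrix level. -/
def IsCPMap {D E : Type*} [Ring D] [Star D] [SMul ℂ D] [Ring E] [Star E] [SMul ℂ E]
    (ψ : D → E) : Prop :=
  (∀ x y, ψ (x + y) = ψ x + ψ y) ∧ (∀ (c : ℂ) (x : D), ψ (c • x) = c • ψ x) ∧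
  ∀ (n : ℕ) (M : Matrix (Fin n) (Fin n) D), IsSqPos M → IsSqPos (M.map ψ)

/-- An order zero map: orthogonal positive elements are sent to orthogonal elements. -/
def IsOrderZero {D E : Type*} [Ring D] [Star D] [Ring E] [Star E] (ψ : D → E) : Prop :=
  ∀ x y : D, IsSqPos x → IsSqPos y → x * y = 0 → ψ x * ψ y = 0

/-- A simple C*-algebra: nonzero, and the only closed two-sided ideals are `⊥` and `⊤`. -/
def IsSimpleCStar (A : Type*) [NonUnitalNonAssocRing A] [TopologicalSpace A] : Prop :=
  (∃ a : A, a ≠ 0) ∧ ∀ I : TwoSidedIdeal A, IsClosed (I : Set A) → I = ⊥ ∨ I = ⊤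

/-- Stably finite: every isometry in every matrix algebra over `A` is a unitary. -/
def StablyFinite (A : Type*) [Ring A] [StarRing A] : Prop :=
  ∀ (n : ℕ) (v : Matrix (Fin n) (Fin n) A), star v * v = 1 → v * star v = 1

section SeqAlg

variable (R : Type*) [NormedRing R] [StarRing R] [NormedStarGroup R] [NormedAlgebra ℂ R]

/-- The algebra `ℓ∞(ℕ, R)` of bounded sequences in `R`. -/
def BddSeq : Subalgebra ℂ (ℕ → R) where
  carrier := {f | ∃ C, ∀ n, ‖f n‖ ≤ C}
  zero_mem' := ⟨0, fun n => by simp⟩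
  one_mem' := ⟨‖(1 : R)‖, fun n => by simp⟩
  add_mem' := by
    rintro f g ⟨C, hC⟩ ⟨D, hD⟩
    exact ⟨C + D, fun n => (norm_add_le _ _).trans (add_le_add (hC n) (hD n))⟩
  mul_mem' := by
    rintro f g ⟨C, hC⟩ ⟨D, hD⟩
    exact ⟨C * D, fun n => (norm_mul_le _ _).trans
      (mul_le_mul (hC n) (hD n) (norm_nonneg _) ((norm_nonneg _).trans (hC 0)))⟩
  algebraMap_mem' := fun c => ⟨‖algebraMap ℂ R c‖, fun n => by simp⟩

variable {R}

lemma BddSeq.bound (f : BddSeq R) : ∃ C, ∀ n, ‖(f : ℕ → R) n‖ ≤ C := f.2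

variable (R)

/-- The congruence on `ℓ∞(ℕ, R)` identifying sequences that agree up to a null sequence
(i.e. modulo `c₀(ℕ, R)`). -/
def seqCon : RingCon (BddSeq R) where
  r f g := Filter.Tendsto (fun n => ‖(f : ℕ → R) n - (g : ℕ → R) n‖) Filter.atTop (nhds 0)
  iseqv := by
    constructor
    · intro f
      simpa using (tendsto_const_nhds : Filter.Tendsto (fun _ : ℕ => (0:ℝ)) Filter.atTop (nhds 0))
    · intro f g h
      simpa [norm_sub_rev] using h
    · intro f g h h1 h2
      refine squeeze_zero (fun n => norm_nonneg _) (fun n => ?_) (by simpa using h1.add h2)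
      simpa [dist_eq_norm] using dist_triangle ((f : ℕ → R) n) ((g : ℕ → R) n) ((h : ℕ → R) n)
  add' := by
    intro w x y z h1 h2
    refine squeeze_zero (fun n => norm_nonneg _) (fun n => ?_) (by simpa using h1.add h2)
    have key : ((w + y : BddSeq R) : ℕ → R) n - ((x + z : BddSeq R) : ℕ → R) n
        = ((w : ℕ → R) n - (x : ℕ → R) n) + ((y : ℕ → R) n - (z : ℕ → R) n) := by
      simp only [Subalgebra.coe_add, Pi.add_apply]
      abel
    rw [key]
    exact norm_add_le _ _
  mul' := by
    intro w x y z h1 h2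
    obtain ⟨C, hC⟩ := BddSeq.bound w
    obtain ⟨D, hD⟩ := BddSeq.bound z
    refine squeeze_zero (fun n => norm_nonneg _) (fun n => ?_)
      (by simpa using (h2.const_mul C).add (h1.mul_const D))
    have key : ((w * y : BddSeq R) : ℕ → R) n - ((x * z : BddSeq R) : ℕ → R) n
        = (w : ℕ → R) n * ((y : ℕ → R) n - (z : ℕ → R) n)
          + ((w : ℕ → R) n - (x : ℕ → R) n) * (z : ℕ → R) n := by
      simp only [Subalgebra.coe_mul, Pi.mul_apply, mul_sub, sub_mul]
      abel
    rw [key]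
    calc ‖(w : ℕ → R) n * ((y : ℕ → R) n - (z : ℕ → R) n)
          + ((w : ℕ → R) n - (x : ℕ → R) n) * (z : ℕ → R) n‖
        ≤ ‖(w : ℕ → R) n * ((y : ℕ → R) n - (z : ℕ → R) n)‖
          + ‖((w : ℕ → R) n - (x : ℕ → R) n) * (z : ℕ → R) n‖ := norm_add_le _ _
      _ ≤ ‖(w : ℕ → R) n‖ * ‖(y : ℕ → R) n - (z : ℕ → R) n‖
          + ‖(w : ℕ → R) n - (x : ℕ → R) n‖ * ‖(z : ℕ → R) n‖ :=
            add_le_add (norm_mul_le _ _) (norm_mul_le _ _)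
      _ ≤ C * ‖(y : ℕ → R) n - (z : ℕ → R) n‖
          + ‖(w : ℕ → R) n - (x : ℕ → R) n‖ * D :=
            add_le_add (mul_le_mul_of_nonneg_right (hC n) (norm_nonneg _))
              (mul_le_mul_of_nonneg_left (hD n) (norm_nonneg _))

/-- The sequence algebra `R_∞ = ℓ∞(ℕ, R)/c₀(ℕ, R)`. -/
abbrev SeqAlg := (seqCon R).Quotient

variable {R}

/-- The quotient map `ℓ∞(ℕ, R) → R_∞`. -/
def SeqAlg.mk (f : BddSeq R) : SeqAlg R := Quotient.mk (seqCon R).toSetoid f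

/-- Pointwise star on bounded sequences. -/
def BddSeq.star' (f : BddSeq R) : BddSeq R :=
  ⟨fun n => star ((f : ℕ → R) n), by
    obtain ⟨C, hC⟩ := BddSeq.bound f
    exact ⟨C, fun n => by rw [norm_star]; exact hC n⟩⟩

noncomputable instance : Star (SeqAlg R) :=
  ⟨Quotient.map BddSeq.star' (by
    intro f g h
    have key : (fun n => ‖(BddSeq.star' f : ℕ → R) n - (BddSeq.star' g : ℕ → R) n‖)
        = fun n => ‖(f : ℕ → R) n - (g : ℕ → R) n‖ := by
      funext n
      show ‖star ((f : ℕ → R) n) - star ((g : ℕ → R) n)‖ = _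
      rw [← star_sub, norm_star]
    show Filter.Tendsto _ Filter.atTop (nhds 0)
    rw [key]
    exact h)⟩

/-- Pointwise scalar multiplication on bounded sequences. -/
def BddSeq.csmul (c : ℂ) (f : BddSeq R) : BddSeq R :=
  ⟨fun n => c • (f : ℕ → R) n, by
    obtain ⟨C, hC⟩ := BddSeq.bound f
    exact ⟨‖c‖ * C, fun n => by
      rw [norm_smul]
      exact mul_le_mul_of_nonneg_left (hC n) (norm_nonneg _)⟩⟩

noncomputable instance : SMul ℂ (SeqAlg R) :=
  ⟨fun c x => Quotient.map (BddSeq.csmul c) (by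
    intro f g h
    have key : (fun n => ‖(BddSeq.csmul c f : ℕ → R) n - (BddSeq.csmul c g : ℕ → R) n‖)
        = fun n => ‖c‖ * ‖(f : ℕ → R) n - (g : ℕ → R) n‖ := by
      funext n
      show ‖c • (f : ℕ → R) n - c • (g : ℕ → R) n‖ = _
      rw [← smul_sub, norm_smul]
    show Filter.Tendsto _ Filter.atTop (nhds 0)
    rw [key]
    simpa using h.const_mul ‖c‖) x⟩

/-- The norm on the sequence algebra: the `limsup` of the norms of (any representative)
sequence. -/
noncomputable instance : Norm (SeqAlg R) :=
  ⟨fun x => Filter.limsup (fun n => ‖((Quotient.out x : BddSeq R) : ℕ → R) n‖) Filter.atTop⟩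

/-- The canonical embedding of `R` into its sequence algebra `R_∞` as constant sequences. -/
def toSeq (a : R) : SeqAlg R :=
  SeqAlg.mk ⟨fun _ => a, ⟨‖a‖, fun _ => le_rfl⟩⟩

end SeqAlg

/-- A `*`-homomorphism `φ : A → B` is *tracially sequentially-split by order zero map* if
for every nonzero positive `z ∈ A_∞` there are a completely positive order zero map
`ψ : B → A_∞` and a nonzero positive `g ∈ A_∞ ∩ A'` with `ψ(φ(a)) = a·g` for all `a ∈ A`
and `1 - g ≲ z` in `A_∞`. -/
def TraciallySeqSplit {A : Type*} [NormedRing A] [StarRing A] [NormedStarGroup A]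
    [NormedAlgebra ℂ A] {B : Type*} [Ring B] [Star B] [SMul ℂ B] (φ : A → B) : Prop :=
  ∀ z : SeqAlg A, IsSqPos z → z ≠ 0 →
    ∃ (ψ : B → SeqAlg A) (g : SeqAlg A),
      IsCPMap ψ ∧ IsOrderZero ψ ∧ IsSqPos g ∧ g ≠ 0 ∧
      (∀ a : A, toSeq a * g = g * toSeq a) ∧
      (∀ a : A, ψ (φ a) = toSeq a * g) ∧
      CuntzLE (1 - g) z

end

/-- For every continuous `f : [0,1] → ℝ` with `f(0) = 0` and every
`ε > 0` there is `δ > 0` such that in any unital C*-algebra `A`, for positive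
contractions `a, b` with `‖ab - b‖ < δ` and `‖ba - b‖ < δ` one has
`‖a f(b) - f(b)‖ < ε`, where `f(b)` is given by the continuous functional calculus. -/
theorem almost_invariance_of_functional_calculus
    (f : ℝ → ℝ) (hf : ContinuousOn f (Set.Icc 0 1)) (hf0 : f 0 = 0)
    (ε : ℝ) (hε : 0 < ε) :
    ∃ δ : ℝ, 0 < δ ∧ ∀ (A : Type*) [CStarAlgebra A], ∀ a b : A,
      IsSqPos a → ‖a‖ ≤ 1 → IsSqPos b → ‖b‖ ≤ 1 →
      ‖a * b - b‖ < δ → ‖b * a - b‖ < δ →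
      ‖a * cfc f b - cfc f b‖ < ε := by
  -- Choose a polynomial `p` with `p 0 = 0` approximating `f` to within `ε / 3` on `[0, 1]`.
  obtain ⟨p₀, hp₀⟩ := exists_polynomial_near_of_continuousOn 0 1 f hf (ε / 6) (by positivity)
  set p : Polynomial ℝ := p₀ - Polynomial.C (p₀.eval 0) with hp_def
  have hp0 : p.coeff 0 = 0 := by
    simp [hp_def, Polynomial.coeff_zero_eq_eval_zero]
  have hp_near : ∀ x ∈ Set.Icc (0 : ℝ) 1, |p.eval x - f x| < ε / 3 := by
    intro x hx
    have h1 := hp₀ x hx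
    have h2 := hp₀ 0 (by norm_num)
    rw [hf0, sub_zero] at h2
    have : p.eval x - f x = (p₀.eval x - f x) - p₀.eval 0 := by
      simp [hp_def]; ring
    rw [this]
    calc |(p₀.eval x - f x) - p₀.eval 0| ≤ |p₀.eval x - f x| + |p₀.eval 0| := abs_sub _ _
      _ < ε / 6 + ε / 6 := add_lt_add h1 h2
      _ = ε / 3 := by ring
  set C : ℝ := ∑ i ∈ Finset.range (p.natDegree + 1), |p.coeff i| with hC_def
  have hC0 : 0 ≤ C := Finset.sum_nonneg fun i _ => abs_nonneg _
  refine ⟨ε / (3 * (C + 1)), by positivity, fun A _ a b ha hna hb hnb hab hba => ?_⟩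
  obtain (hA | hA) := subsingleton_or_nontrivial A
  · simpa [Subsingleton.elim (a * cfc f b - cfc f b) 0] using hε
  obtain ⟨y, hy⟩ := hb
  have hb_sa : IsSelfAdjoint b := hy ▸ IsSelfAdjoint.star_mul_self y
  have hspec : spectrum ℝ b ⊆ Set.Icc 0 1 := by
    intro x hx
    have hx' : x ∈ spectrum ℝ (star y * y) := hy ▸ hx
    refine ⟨spectrum_star_mul_self_nonneg x hx', ?_⟩
    have := spectrum.norm_le_norm_of_mem hx
    have hx' : |x| ≤ 1 := by
      simpa [Real.norm_eq_abs] using this.trans hnb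
    exact (le_abs_self x).trans hx'
  have hδ' : ‖a * b - b‖ < ε / (3 * (C + 1)) := hab
  -- bound powers of `b`
  have hbk : ∀ k : ℕ, ‖b ^ k‖ ≤ 1 := by
    intro k
    induction k with
    | zero => simp
    | succ k ih =>
      calc ‖b ^ (k + 1)‖ = ‖b ^ k * b‖ := by rw [pow_succ]
        _ ≤ ‖b ^ k‖ * ‖b‖ := norm_mul_le _ _
        _ ≤ 1 * 1 := mul_le_mul ih hnb (norm_nonneg _) zero_le_one
        _ = 1 := one_mul 1
  -- key: `‖a * b ^ i - b ^ i‖ ≤ ‖a * b - b‖` for `i ≥ 1`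
  have hkey : ∀ k : ℕ, ‖a * b ^ (k + 1) - b ^ (k + 1)‖ ≤ ‖a * b - b‖ := by
    intro k
    have : a * b ^ (k + 1) - b ^ (k + 1) = (a * b - b) * b ^ k := by
      rw [sub_mul, pow_succ', mul_assoc]
    rw [this]
    calc ‖(a * b - b) * b ^ k‖ ≤ ‖a * b - b‖ * ‖b ^ k‖ := norm_mul_le _ _
      _ ≤ ‖a * b - b‖ * 1 := mul_le_mul_of_nonneg_left (hbk k) (norm_nonneg _)
      _ = ‖a * b - b‖ := mul_one _
  -- the polynomial part
  set P : A := Polynomial.aeval b p with hP_def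
  have hP_bound : ‖a * P - P‖ ≤ C * ‖a * b - b‖ := by
    have hPsum : P = ∑ i ∈ Finset.range (p.natDegree + 1), p.coeff i • b ^ i :=
      Polynomial.aeval_eq_sum_range b
    have hsplit : a * P - P
        = ∑ i ∈ Finset.range (p.natDegree + 1), p.coeff i • (a * b ^ i - b ^ i) := by
      rw [hPsum, Finset.mul_sum, ← Finset.sum_sub_distrib]
      refine Finset.sum_congr rfl fun i _ => ?_
      rw [smul_sub, mul_smul_comm]
    rw [hsplit, hC_def, Finset.sum_mul]
    refine norm_sum_le_of_le _ fun i _ => ?_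
    rw [norm_smul, Real.norm_eq_abs]
    cases i with
    | zero => simp [hp0]
    | succ k =>
      exact mul_le_mul_of_nonneg_left (hkey k) (abs_nonneg _)
  -- the remainder part
  set g : ℝ → ℝ := fun x => f x - p.eval x with hg_def
  have hg_cont : ContinuousOn g (spectrum ℝ b) :=
    ((hf.mono hspec).sub (p.continuous.continuousOn)).mono le_rfl
  have hf_cont : ContinuousOn f (spectrum ℝ b) := hf.mono hspec
  set R : A := cfc g b with hR_def
  have hR_bound : ‖R‖ ≤ ε / 3 := by
    refine norm_cfc_le (by positivity) fun x hx => ?_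
    have := hp_near x (hspec hx)
    rw [Real.norm_eq_abs, hg_def]
    rw [abs_sub_comm] at this
    exact this.le
  -- decompose `cfc f b`
  have hdecomp : cfc f b = P + R := by
    have h1 : cfc f b = cfc (fun x => p.eval x + g x) b := by
      congr 1
      funext x
      simp [hg_def]
    rw [h1, cfc_add b _ _ (p.continuous.continuousOn) hg_cont, hR_def, hP_def,
      ← cfc_polynomial p b]
  -- put it all together
  have hfinal : a * cfc f b - cfc f b = (a * P - P) + (a * R - R) := by
    rw [hdecomp, mul_add]; abel
  rw [hfinal]
  have hR2 : ‖a * R - R‖ ≤ 2 * (ε / 3) := by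
    calc ‖a * R - R‖ ≤ ‖a * R‖ + ‖R‖ := norm_sub_le _ _
      _ ≤ ‖a‖ * ‖R‖ + ‖R‖ := add_le_add (norm_mul_le _ _) le_rfl
      _ ≤ 1 * (ε / 3) + ε / 3 :=
          add_le_add (mul_le_mul hna hR_bound (norm_nonneg _) zero_le_one) hR_bound
      _ = 2 * (ε / 3) := by ring
  have hP2 : ‖a * P - P‖ < ε / 3 := by
    refine hP_bound.trans_lt ?_
    calc C * ‖a * b - b‖ ≤ C * (ε / (3 * (C + 1))) :=
          mul_le_mul_of_nonneg_left hδ'.le hC0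
      _ < (C + 1) * (ε / (3 * (C + 1))) :=
          mul_lt_mul_of_pos_right (lt_add_one C) (by positivity)
      _ = ε / 3 := by
          have hC1 : C + 1 ≠ 0 := by positivity
          field_simp
  calc ‖(a * P - P) + (a * R - R)‖ ≤ ‖a * P - P‖ + ‖a * R - R‖ := norm_add_le _ _
    _ < ε / 3 + 2 * (ε / 3) := add_lt_add_of_lt_of_le hP2 hR2
    _ = ε := by ring
end

section
/- Let A be a unital C*-algebra. For any ε > 0 and any integer n > 0 there exists δ > 0 (depending only on ε and n) such that: whenever a₁, …, aₙ ∈ A are positive contractions with ‖aᵢaⱼ‖ < δ for all i ≠ j, there exist positive contractions b₁, …, bₙ ∈ A with bᵢbⱼ = 0 for all i ≠ j and ‖aᵢ − bᵢ‖ < ε for i = 1, …, n. -/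
open Filter Topology

/-! Induction on `n`. Given pairwise orthogonal positive contractions `b₁, …, bₙ` close to
`a₁, …, aₙ`, replace each `bᵢ` by its cutoff `(bᵢ - η)₊` and `aₙ₊₁` by `p aₙ₊₁ p`, where
`p = 1 - ∑ ramp η (bᵢ)` and `ramp η t = t / max t η` (`= min (t / η) 1` for `t ≥ 0`).
The summands `ramp η (bᵢ)` are orthogonal positive contractions, so `‖p‖ ≤ 1`; `ramp η = 1` on
the support of the cutoff, so `p` kills every cutoff; and `ramp η (bᵢ) = (max bᵢ η)⁻¹ bᵢ`, so
`‖aₙ₊₁ - p aₙ₊₁ p‖ ≤ 2 ∑ ‖bᵢ aₙ₊₁‖ / η`, which is small because `bᵢ ≈ aᵢ` and `‖aᵢ aₙ₊₁‖` is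
small. -/

lemma Fin.pairwise_snoc {α : Type*} {r : α → α → Prop} {n : ℕ} {q : Fin n → α} {c : α}
    (hq : Pairwise fun i j => r (q i) (q j)) (hqc : ∀ i, r (q i) c) (hcq : ∀ i, r c (q i)) :
    Pairwise fun i j =>
      r (Fin.snoc (α := fun _ => α) q c i) (Fin.snoc (α := fun _ => α) q c j) := by
  intro i j hij
  induction i using Fin.lastCases with
  | last =>
    induction j using Fin.lastCases with
    | last => exact absurd rfl hij
    | cast j => simpa using hcq j
  | cast i =>
    induction j using Fin.lastCases with
    | last => simpa using hqc i
    | cast j => simpa using hq (ne_of_apply_ne Fin.castSucc hij)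

section CStarAlgebra

variable {A : Type*} [CStarAlgebra A]

lemma cfc_mul_cfc_eq_zero_of_mul_eq_zero {a b : A} (hab : a * b = 0) {f g k l : ℝ → ℝ}
    (hf : ∀ t, f t = t * k t) (hg : ∀ t, g t = t * l t)
    (hk : ContinuousOn k (spectrum ℝ a)) (hl : ContinuousOn l (spectrum ℝ b)) :
    cfc f a * cfc g b = 0 := by
  by_cases ha : IsSelfAdjoint a
  · by_cases hb : IsSelfAdjoint b
    · have hfa : cfc f a = cfc k a * a := by
        rw [funext fun t => (hf t).trans (mul_comm _ _), cfc_mul k (fun t => t) a hk, cfc_id' ℝ a]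
      have hgb : cfc g b = b * cfc l b := by
        rw [funext hg, cfc_mul (fun t => t) l b continuousOn_id hl, cfc_id' ℝ b]
      rw [hfa, hgb, mul_assoc, ← mul_assoc a, hab, zero_mul, mul_zero]
    · rw [cfc_apply_of_not_predicate b hb, mul_zero]
  · rw [cfc_apply_of_not_predicate a ha, zero_mul]

lemma norm_sub_mul_mul_self_le {p a : A} (hp : IsSelfAdjoint p) (hp1 : ‖p‖ ≤ 1)
    (ha : IsSelfAdjoint a) : ‖a - p * a * p‖ ≤ 2 * ‖(1 - p) * a‖ := by
  have hadj : ‖a * (1 - p)‖ = ‖(1 - p) * a‖ := by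
    rw [← norm_star, star_mul, ha.star_eq, star_sub, star_one, hp.star_eq]
  calc ‖a - p * a * p‖ = ‖(1 - p) * a + p * (a * (1 - p))‖ := by congr 1; noncomm_ring
    _ ≤ ‖(1 - p) * a‖ + ‖p‖ * ‖a * (1 - p)‖ := by
        grw [norm_add_le, norm_mul_le p]
    _ ≤ ‖(1 - p) * a‖ + 1 * ‖(1 - p) * a‖ := by rw [hadj]; gcongr
    _ = 2 * ‖(1 - p) * a‖ := by ring

variable [PartialOrder A] [StarOrderedRing A]

lemma norm_sum_le_one_of_pairwise_mul_eq_zero {ι : Type*} (s : Finset ι) {e : ι → A}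
    (he : ∀ i, 0 ≤ e i ∧ ‖e i‖ ≤ 1) (horth : Pairwise fun i j => e i * e j = 0) :
    ‖∑ i ∈ s, e i‖ ≤ 1 := by
  set x := ∑ i ∈ s, e i
  have hx : 0 ≤ x := Finset.sum_nonneg fun i _ => (he i).1
  have hsq : x * x = ∑ i ∈ s, e i * e i := by
    rw [Finset.sum_mul_sum]
    refine Finset.sum_congr rfl fun i hi => Finset.sum_eq_single i
      (fun j _ hji => horth hji.symm) (fun h => absurd hi h)
  have hsq_le : x * x ≤ x := by
    rw [hsq]
    refine Finset.sum_le_sum fun i _ => ?_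
    have hei : e i ≤ 1 := (CStarAlgebra.norm_le_one_iff_of_nonneg _ (he i).1).mp (he i).2
    simpa [sq] using CStarAlgebra.pow_antitone (he i).1 hei (show 1 ≤ 2 by norm_num)
  have hnorm : ‖x‖ * ‖x‖ ≤ ‖x‖ := by
    rw [← CStarRing.norm_star_mul_self, hx.isSelfAdjoint.star_eq]
    exact CStarAlgebra.norm_le_norm_of_nonneg_of_le hx.isSelfAdjoint.mul_self_nonneg hsq_le
  nlinarith [norm_nonneg x]

lemma norm_one_sub_le_one {x : A} (hx : 0 ≤ x) (hx1 : ‖x‖ ≤ 1) : ‖1 - x‖ ≤ 1 := by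
  have hx' : x ≤ 1 := (CStarAlgebra.norm_le_one_iff_of_nonneg x hx).mp hx1
  exact (CStarAlgebra.mem_Icc_iff_norm_le_one.mp ⟨sub_nonneg.mpr hx', sub_le_self 1 hx⟩).2

end CStarAlgebra

noncomputable def cutoff (η t : ℝ) : ℝ := max (t - η) 0

noncomputable def ramp (η t : ℝ) : ℝ := t / max t η

section Cutoff

variable {η : ℝ}

lemma continuous_cutoff (η : ℝ) : Continuous (cutoff η) := by
  unfold cutoff; fun_prop

lemma exists_continuous_cutoff_eq_mul (hη : 0 < η) :
    ∃ k : ℝ → ℝ, Continuous k ∧ ∀ t, cutoff η t = t * k t := by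
  refine ⟨fun t => cutoff η t / max t η, (continuous_cutoff η).div (by fun_prop)
    fun _ => (lt_max_of_lt_right hη).ne', fun t => ?_⟩
  rcases le_or_gt t η with ht | ht
  · simp [cutoff, ht]
  · show cutoff η t = t * (cutoff η t / max t η)
    rw [max_eq_left ht.le, mul_div_cancel₀ _ (hη.trans ht).ne']

lemma continuous_inv_max (hη : 0 < η) : Continuous fun t : ℝ => (max t η)⁻¹ :=
  (continuous_id.max continuous_const).inv₀ fun _ => (lt_max_of_lt_right hη).ne'

lemma exists_continuous_ramp_eq_mul (hη : 0 < η) :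
    ∃ k : ℝ → ℝ, Continuous k ∧ ∀ t, ramp η t = t * k t :=
  ⟨fun t => (max t η)⁻¹, continuous_inv_max hη, fun _ => div_eq_mul_inv _ _⟩

lemma continuous_ramp (hη : 0 < η) : Continuous (ramp η) :=
  continuous_id.div (continuous_id.max continuous_const) fun _ => (lt_max_of_lt_right hη).ne'

lemma cutoff_mul_ramp (hη : 0 < η) (t : ℝ) : cutoff η t * ramp η t = cutoff η t := by
  rcases le_or_gt t η with ht | ht
  · simp [cutoff, ht]
  · rw [ramp, max_eq_left ht.le, div_self (hη.trans ht).ne', mul_one]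

variable {A : Type*} [CStarAlgebra A]

lemma norm_cfc_ramp_mul_le (hη : 0 < η) {b : A} (hb : IsSelfAdjoint b) (y : A) :
    ‖cfc (ramp η) b * y‖ ≤ ‖b * y‖ / η := by
  have hfac : cfc (ramp η) b = cfc (fun t : ℝ => (max t η)⁻¹) b * b := by
    rw [show ramp η = fun t => (max t η)⁻¹ * t from funext fun t => div_eq_inv_mul _ _,
      cfc_mul _ (fun t : ℝ => t) b (continuous_inv_max hη).continuousOn, cfc_id' ℝ b]
  have hnorm : ‖cfc (fun t : ℝ => (max t η)⁻¹) b‖ ≤ η⁻¹ :=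
    norm_cfc_le (inv_nonneg.mpr hη.le) fun t _ => by
      rw [norm_inv, Real.norm_of_nonneg (hη.le.trans (le_max_right t η))]
      exact inv_anti₀ hη (le_max_right t η)
  calc ‖cfc (ramp η) b * y‖ ≤ ‖cfc (fun t : ℝ => (max t η)⁻¹) b‖ * ‖b * y‖ := by
        rw [hfac, mul_assoc]; exact norm_mul_le _ _
    _ ≤ η⁻¹ * ‖b * y‖ := by gcongr
    _ = ‖b * y‖ / η := by ring

variable [PartialOrder A] [StarOrderedRing A]

lemma cfc_cutoff_nonneg (η : ℝ) (b : A) : 0 ≤ cfc (cutoff η) b :=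
  cfc_nonneg fun _ _ => le_max_right _ _

lemma cfc_cutoff_le_self {b : A} (hb : 0 ≤ b) (hη : 0 ≤ η) : cfc (cutoff η) b ≤ b := by
  calc cfc (cutoff η) b ≤ cfc (fun t : ℝ => t) b :=
        cfc_mono (fun t ht => max_le (by linarith) (spectrum_nonneg_of_nonneg hb ht))
          (continuous_cutoff η).continuousOn
    _ = b := cfc_id' ℝ b

lemma norm_sub_cfc_cutoff_le {b : A} (hb : 0 ≤ b) (hη : 0 ≤ η) :
    ‖b - cfc (cutoff η) b‖ ≤ η := by
  have hdiff : b - cfc (cutoff η) b = cfc (fun t => t - cutoff η t) b := by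
    rw [cfc_sub (fun t : ℝ => t) (cutoff η) b continuousOn_id (continuous_cutoff η).continuousOn,
      cfc_id' ℝ b]
  rw [hdiff]
  refine norm_cfc_le hη fun t ht => ?_
  have ht0 := spectrum_nonneg_of_nonneg hb ht
  rw [Real.norm_eq_abs, abs_le, cutoff]
  constructor
  · linarith [max_le (sub_le_self t hη) ht0]
  · linarith [le_max_left (t - η) 0]

lemma cfc_ramp_nonneg {b : A} (hb : 0 ≤ b) : 0 ≤ cfc (ramp η) b :=
  cfc_nonneg fun t ht => div_nonneg (spectrum_nonneg_of_nonneg hb ht)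
    ((spectrum_nonneg_of_nonneg hb ht).trans (le_max_left t η))

lemma norm_cfc_ramp_le_one {b : A} (hb : 0 ≤ b) : ‖cfc (ramp η) b‖ ≤ 1 := by
  refine norm_cfc_le zero_le_one fun t ht => ?_
  have ht0 := spectrum_nonneg_of_nonneg hb ht
  rw [ramp, Real.norm_of_nonneg (div_nonneg ht0 (ht0.trans (le_max_left t η)))]
  exact div_le_one_of_le₀ (le_max_left t η) (ht0.trans (le_max_left t η))

end Cutoff

section Orthogonalization

variable {A : Type*} [CStarAlgebra A] [PartialOrder A] [StarOrderedRing A]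

lemma isSqPos_iff_nonneg {x : A} : IsSqPos x ↔ 0 ≤ x :=
  CStarAlgebra.nonneg_iff_eq_star_mul_self.symm

lemma exists_pairwise_mul_eq_zero_snoc {n : ℕ} {b : Fin n → A}
    (hb : ∀ i, 0 ≤ b i ∧ ‖b i‖ ≤ 1) (hbb : Pairwise fun i j => b i * b j = 0)
    {a : A} (ha : 0 ≤ a ∧ ‖a‖ ≤ 1) {η κ : ℝ} (hη : 0 < η) (hba : ∀ i, ‖b i * a‖ ≤ κ) :
    ∃ c : Fin (n + 1) → A, (∀ i, 0 ≤ c i ∧ ‖c i‖ ≤ 1) ∧ (Pairwise fun i j => c i * c j = 0) ∧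
      (∀ i, ‖b i - c i.castSucc‖ ≤ η) ∧ ‖a - c (Fin.last n)‖ ≤ 2 * (n * κ / η) := by
  obtain ⟨k, hk, hcutoff⟩ := exists_continuous_cutoff_eq_mul hη
  obtain ⟨l, hl, hramp⟩ := exists_continuous_ramp_eq_mul hη
  set q : Fin n → A := fun i => cfc (cutoff η) (b i)
  set x : A := ∑ i, cfc (ramp η) (b i)
  have hx : 0 ≤ x := Finset.sum_nonneg fun i _ => cfc_ramp_nonneg (hb i).1
  have hx1 : ‖x‖ ≤ 1 := norm_sum_le_one_of_pairwise_mul_eq_zero _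
    (fun i => ⟨cfc_ramp_nonneg (hb i).1, norm_cfc_ramp_le_one (hb i).1⟩)
    fun i j hij => cfc_mul_cfc_eq_zero_of_mul_eq_zero (hbb hij) hramp hramp
      hl.continuousOn hl.continuousOn
  set p : A := 1 - x
  have hp : IsSelfAdjoint p := (IsSelfAdjoint.one A).sub hx.isSelfAdjoint
  have hp1 : ‖p‖ ≤ 1 := norm_one_sub_le_one hx hx1
  -- `q i` is fixed by `ramp η (b i)` and annihilated by `ramp η (b j)` for `j ≠ i`
  have hqp : ∀ i, q i * p = 0 := by
    intro i
    rw [mul_sub, mul_one, Finset.mul_sum, Finset.sum_eq_single i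
      (fun j _ hji => cfc_mul_cfc_eq_zero_of_mul_eq_zero (hbb hji.symm) hcutoff hramp
        hk.continuousOn hl.continuousOn) (by simp),
      ← cfc_mul _ _ _ (continuous_cutoff η).continuousOn (continuous_ramp hη).continuousOn]
    simp only [cutoff_mul_ramp hη, sub_self, q]
  have hq : ∀ i, 0 ≤ q i := fun i => cfc_cutoff_nonneg η (b i)
  have hpq : ∀ i, p * q i = 0 := fun i => by
    simpa [hp.star_eq, (hq i).isSelfAdjoint.star_eq] using congrArg star (hqp i)
  refine ⟨Fin.snoc q (p * a * p), ?_, ?_, ?_, ?_⟩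
  · refine Fin.forall_fin_succ'.mpr ⟨fun i => ?_, ?_⟩
    · simpa using ⟨hq i, (CStarAlgebra.norm_le_norm_of_nonneg_of_le (hq i)
        (cfc_cutoff_le_self (hb i).1 hη.le)).trans (hb i).2⟩
    · simp only [Fin.snoc_last]
      refine ⟨by simpa [hp.star_eq] using star_left_conjugate_nonneg ha.1 p, ?_⟩
      calc ‖p * a * p‖ ≤ ‖p‖ * ‖a‖ * ‖p‖ := norm_mul₃_le
        _ ≤ 1 * 1 * 1 := by gcongr; exact ha.2
        _ = 1 := by ring
  · refine Fin.pairwise_snoc (r := fun x y => x * y = 0)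
      (fun i j hij => cfc_mul_cfc_eq_zero_of_mul_eq_zero (hbb hij) hcutoff hcutoff
        hk.continuousOn hk.continuousOn) (fun i => ?_) (fun i => ?_)
    · rw [← mul_assoc, ← mul_assoc, hqp, zero_mul, zero_mul]
    · rw [mul_assoc, hpq, mul_zero]
  · intro i
    simpa [q] using norm_sub_cfc_cutoff_le (hb i).1 hη.le
  · have hxa : ‖x * a‖ ≤ n * κ / η := calc
      ‖x * a‖ ≤ ∑ i, ‖cfc (ramp η) (b i) * a‖ := by
        rw [Finset.sum_mul]; exact norm_sum_le _ _
      _ ≤ ∑ _i : Fin n, κ / η := Finset.sum_le_sum fun i _ =>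
        (norm_cfc_ramp_mul_le hη (hb i).1.isSelfAdjoint a).trans
          (div_le_div_of_nonneg_right (hba i) hη.le)
      _ = n * κ / η := by simp [mul_div_assoc]
    simp only [Fin.snoc_last]
    calc ‖a - p * a * p‖ ≤ 2 * ‖(1 - p) * a‖ :=
          norm_sub_mul_mul_self_le hp hp1 ha.1.isSelfAdjoint
      _ ≤ 2 * (n * κ / η) := by rw [sub_sub_cancel]; gcongr

lemma exists_pairwise_mul_eq_zero_approx (n : ℕ) {ε : ℝ} (hε : 0 < ε) :
    ∃ δ > 0, ∀ a : Fin n → A, (∀ i, 0 ≤ a i ∧ ‖a i‖ ≤ 1) →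
      (Pairwise fun i j => ‖a i * a j‖ < δ) →
      ∃ b : Fin n → A, (∀ i, 0 ≤ b i ∧ ‖b i‖ ≤ 1) ∧ (Pairwise fun i j => b i * b j = 0) ∧
        ∀ i, ‖a i - b i‖ < ε := by
  induction n generalizing ε with
  | zero => exact ⟨1, one_pos, fun a ha _ => ⟨a, ha, fun i => i.elim0, fun i => i.elim0⟩⟩
  | succ n ih =>
    set c : ℝ := ε ^ 2 / (8 * (n + 1))
    have hc : 0 < c := by positivity
    obtain ⟨δ₀, hδ₀, H⟩ := ih (lt_min (half_pos hε) hc)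
    refine ⟨min δ₀ c, lt_min hδ₀ hc, fun a ha haa => ?_⟩
    obtain ⟨b, hb, hbb, hab⟩ := H (fun i => a i.castSucc) (fun i => ha _)
      fun i j hij => (haa ((Fin.castSucc_injective n).ne hij)).trans_le (min_le_left _ _)
    have hba : ∀ i, ‖b i * a (Fin.last n)‖ ≤ 2 * c := fun i => calc
      ‖b i * a (Fin.last n)‖
          ≤ ‖b i - a i.castSucc‖ * ‖a (Fin.last n)‖ + ‖a i.castSucc * a (Fin.last n)‖ := by
        grw [← norm_mul_le, ← norm_add_le, sub_mul, sub_add_cancel]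
      _ ≤ c * 1 + c := by
        rw [norm_sub_rev]
        gcongr
        · exact (hab i).le.trans (min_le_right _ _)
        · exact (ha _).2
        · exact (haa (Fin.castSucc_lt_last i).ne).le.trans (min_le_right _ _)
      _ = 2 * c := by ring
    obtain ⟨d, hd, hdd, hbd, had⟩ :=
      exists_pairwise_mul_eq_zero_snoc hb hbb (ha _) (half_pos hε) hba
    refine ⟨d, hd, hdd, Fin.forall_fin_succ'.mpr ⟨fun i => ?_, ?_⟩⟩
    · calc ‖a i.castSucc - d i.castSucc‖ ≤ ‖a i.castSucc - b i‖ + ‖b i - d i.castSucc‖ :=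
            norm_sub_le_norm_sub_add_norm_sub _ _ _
        _ < ε / 2 + ε / 2 := add_lt_add_of_lt_of_le ((hab i).trans_le (min_le_left _ _)) (hbd i)
        _ = ε := add_halves ε
    · have hbound : 2 * (n * (2 * c) / (ε / 2)) = n / (n + 1) * ε := by
        simp only [c]; field_simp; ring
      calc ‖a (Fin.last n) - d (Fin.last n)‖ ≤ n / (n + 1) * ε := had.trans_eq hbound
        _ < 1 * ε := by gcongr; rw [div_lt_one (by positivity)]; linarith
        _ = ε := one_mul ε

end Orthogonalization

theorem orthogonalization_of_almost_orthogonal_general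
    (A : Type*) [CStarAlgebra A] (ε : ℝ) (hε : 0 < ε) (n : ℕ) :
    ∃ δ : ℝ, 0 < δ ∧ ∀ a : Fin n → A,
      (∀ i, IsSqPos (a i) ∧ ‖a i‖ ≤ 1) →
      (∀ i j, i ≠ j → ‖a i * a j‖ < δ) →
      ∃ b : Fin n → A,
        (∀ i, IsSqPos (b i) ∧ ‖b i‖ ≤ 1) ∧
        (∀ i j, i ≠ j → b i * b j = 0) ∧
        (∀ i, ‖a i - b i‖ < ε) := by
  let : PartialOrder A := CStarAlgebra.spectralOrder A
  let : StarOrderedRing A := CStarAlgebra.spectralOrderedRing A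
  obtain ⟨δ, hδ, H⟩ := exists_pairwise_mul_eq_zero_approx (A := A) n hε
  refine ⟨δ, hδ, fun a ha haa => ?_⟩
  obtain ⟨b, hb, hbb, hab⟩ :=
    H a (by simpa only [isSqPos_iff_nonneg] using ha) fun _ _ hij => haa _ _ hij
  exact ⟨b, by simpa only [isSqPos_iff_nonneg] using hb, fun _ _ hij => hbb hij, hab⟩

/-- In a unital C*-algebra: for every `ε > 0` and `n > 0` there is
`δ > 0` such that any `n` positive contractions `a₁, …, aₙ` with pairwise products of
norm `< δ` can be `ε`-approximated by pairwise orthogonal positive contractions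
`b₁, …, bₙ`. -/
theorem orthogonalization_of_almost_orthogonal
    (A : Type*) [CStarAlgebra A] (ε : ℝ) (hε : 0 < ε) (n : ℕ) (hn : 0 < n) :
    ∃ δ : ℝ, 0 < δ ∧ ∀ a : Fin n → A,
      (∀ i, IsSqPos (a i) ∧ ‖a i‖ ≤ 1) →
      (∀ i j, i ≠ j → ‖a i * a j‖ < δ) →
      ∃ b : Fin n → A,
        (∀ i, IsSqPos (b i) ∧ ‖b i‖ ≤ 1) ∧
        (∀ i j, i ≠ j → b i * b j = 0) ∧
        (∀ i, ‖a i - b i‖ < ε) :=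
  orthogonalization_of_almost_orthogonal_general A ε hε n
end
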